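/- arXiv:2506.18430 — 2 statements merged into one kernel-verified Lean document; each statement's English description precedes it below -/
import Mathlib

section
/- Zero-horizon MHE equals EKF (base case of Theorem 1): given prior estimate x̂ with positive definite covariance P, measurement y, linearizations A, C, offsets u, d, positive definite R, gain K = (P⁻¹ + Cᵀ R⁻¹ C)⁻¹ Cᵀ R⁻¹, the minimizer ŵ of w ↦ wᵀ P⁻¹ w + (y - C(x̂ + w) - d)ᵀ R⁻¹ (y - C(x̂ + w) - d) is ŵ = K (y - C x̂ - d), so the MHE prediction A(x̂ + ŵ) + u equals the EKF prediction A(x̂ + K(y - C x̂ - d)) + u. -/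
open Matrix

private lemma quad_key {n : ℕ} (M : Matrix (Fin n) (Fin n) ℝ) (hM : Mᵀ = M)
    (wh w : Fin n → ℝ) :
    (w - wh) ⬝ᵥ (M *ᵥ (w - wh)) =
      w ⬝ᵥ (M *ᵥ w) - 2 * (w ⬝ᵥ (M *ᵥ wh)) + wh ⬝ᵥ (M *ᵥ wh) := by
  have hsw : wh ⬝ᵥ (M *ᵥ w) = w ⬝ᵥ (M *ᵥ wh) := by
    rw [dotProduct_mulVec]; nth_rewrite 1 [← hM]
    rw [vecMul_transpose, dotProduct_comm]
  simp only [mulVec_sub, dotProduct_sub, sub_dotProduct, hsw]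
  ring

theorem zero_horizon_mhe_eq_ekf (n m : ℕ)
    (xh : Fin n → ℝ) (P : Matrix (Fin n) (Fin n) ℝ)
    (R : Matrix (Fin m) (Fin m) ℝ) (C : Matrix (Fin m) (Fin n) ℝ)
    (A : Matrix (Fin n) (Fin n) ℝ) (y d : Fin m → ℝ) (u : Fin n → ℝ)
    (hP : P.PosDef) (hR : R.PosDef)
    (K : Matrix (Fin n) (Fin m) ℝ)
    (hK : K = (P⁻¹ + Cᵀ * R⁻¹ * C)⁻¹ * Cᵀ * R⁻¹)
    (Φ : (Fin n → ℝ) → ℝ)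
    (hΦ : ∀ w, Φ w = w ⬝ᵥ (P⁻¹ *ᵥ w) +
      (y - C *ᵥ (xh + w) - d) ⬝ᵥ (R⁻¹ *ᵥ (y - C *ᵥ (xh + w) - d)))
    (wh : Fin n → ℝ)
    (hw : wh = K *ᵥ (y - C *ᵥ xh - d)) :
    (∀ w, Φ wh ≤ Φ w ∧ (Φ w = Φ wh → w = wh)) ∧
      A *ᵥ (xh + wh) + u = A *ᵥ (xh + K *ᵥ (y - C *ᵥ xh - d)) + u := by
  refine ⟨?_, by rw [hw]⟩
  set e : Fin m → ℝ := y - C *ᵥ xh - d with he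
  set M : Matrix (Fin n) (Fin n) ℝ := P⁻¹ + Cᵀ * R⁻¹ * C with hMdef
  -- M is positive definite
  have hM : M.PosDef := by
    refine hP.inv.add_posSemidef ?_
    have := hR.inv.posSemidef.mul_mul_conjTranspose_same Cᵀ
    simpa [Matrix.mul_assoc] using this
  have hMT : Mᵀ = M := hM.isHermitian
  have hdet : IsUnit M.det := isUnit_iff_ne_zero.mpr (ne_of_gt hM.det_pos)
  -- normal equations
  have hMw : M *ᵥ wh = Cᵀ *ᵥ (R⁻¹ *ᵥ e) := by
    have h1 : M * (M⁻¹ * Cᵀ * R⁻¹) = Cᵀ * R⁻¹ := by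
      rw [← Matrix.mul_assoc, ← Matrix.mul_assoc, Matrix.mul_nonsing_inv _ hdet,
        Matrix.one_mul]
    rw [hw, hK, Matrix.mulVec_mulVec, h1,
      ← Matrix.mulVec_mulVec]
  -- helper dot product lemmas
  have tdot : ∀ (x : Fin n → ℝ) (z : Fin m → ℝ),
      x ⬝ᵥ (Cᵀ *ᵥ z) = (C *ᵥ x) ⬝ᵥ z := by
    intro x z; rw [dotProduct_mulVec, vecMul_transpose]
  have hRT : (R⁻¹)ᵀ = R⁻¹ := hR.inv.isHermitian
  have sdot : ∀ (x z : Fin m → ℝ), x ⬝ᵥ (R⁻¹ *ᵥ z) = z ⬝ᵥ (R⁻¹ *ᵥ x) := by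
    intro x z
    rw [dotProduct_mulVec]; nth_rewrite 1 [← hRT]
    rw [vecMul_transpose, dotProduct_comm]
  -- canonical form of Φ
  have h1 : ∀ v, Φ v = v ⬝ᵥ (M *ᵥ v) - 2 * (v ⬝ᵥ (M *ᵥ wh)) + e ⬝ᵥ (R⁻¹ *ᵥ e) := by
    intro v
    have hres : y - C *ᵥ (xh + v) - d = e - C *ᵥ v := by
      rw [he]; simp [mulVec_add]; abel
    rw [hΦ, hres, hMw, hMdef]
    simp only [add_mulVec, dotProduct_add, ← Matrix.mulVec_mulVec, tdot,
      mulVec_sub, dotProduct_sub, sub_dotProduct]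
    rw [sdot e (C *ᵥ v)]
    ring
  have h2 : ∀ w, Φ w = (w - wh) ⬝ᵥ (M *ᵥ (w - wh)) + Φ wh := by
    intro w
    rw [h1 w, h1 wh, quad_key M hMT]
    ring
  intro w
  have hnn : 0 ≤ (w - wh) ⬝ᵥ (M *ᵥ (w - wh)) := by
    have := hM.posSemidef.dotProduct_mulVec_nonneg (w - wh)
    simpa using this
  constructor
  · rw [h2 w]; linarith
  · intro heq
    by_contra hne
    have hne' : w - wh ≠ 0 := sub_ne_zero.mpr hne
    have hpos : 0 < (w - wh) ⬝ᵥ (M *ᵥ (w - wh)) := by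
      have := hM.dotProduct_mulVec_pos hne'
      simpa using this
    rw [h2 w] at heq
    linarith
end

section
/- Corollary 2.1 single-step instance: let Q be symmetric positive definite, R symmetric positive definite, C compatible, define Ẽ = Cᵀ R⁻¹ C + Q⁻¹. If P = Q + A S Aᵀ for a symmetric positive definite S and square A, then (P⁻¹ + Cᵀ R⁻¹ C)⁻¹ = Ẽ⁻¹ + Ẽ⁻¹ Q⁻¹ A (S⁻¹ + Aᵀ Θ A)⁻¹ Aᵀ Q⁻¹ Ẽ⁻¹, where Θ = Q⁻¹ - Q⁻¹ Ẽ⁻¹ Q⁻¹. -/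
open Matrix

theorem corollary_2_1_single_step (n m p : ℕ)
    (Q : Matrix (Fin n) (Fin n) ℝ) (R : Matrix (Fin m) (Fin m) ℝ)
    (C : Matrix (Fin m) (Fin n) ℝ) (A : Matrix (Fin n) (Fin p) ℝ)
    (S : Matrix (Fin p) (Fin p) ℝ) (P : Matrix (Fin n) (Fin n) ℝ)
    (hQ : Q.PosDef) (hR : R.PosDef) (hS : S.PosDef)
    (hP : P = Q + A * S * Aᵀ) :
    (P⁻¹ + Cᵀ * R⁻¹ * C)⁻¹ =
      (Cᵀ * R⁻¹ * C + Q⁻¹)⁻¹ +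
        (Cᵀ * R⁻¹ * C + Q⁻¹)⁻¹ * Q⁻¹ * A *
          (S⁻¹ + Aᵀ * (Q⁻¹ - Q⁻¹ * (Cᵀ * R⁻¹ * C + Q⁻¹)⁻¹ * Q⁻¹) * A)⁻¹ *
          Aᵀ * Q⁻¹ * (Cᵀ * R⁻¹ * C + Q⁻¹)⁻¹ := by
  have hQi : (Q⁻¹).PosDef := hQ.inv
  have hRi : (R⁻¹).PosDef := hR.inv
  have hSi : (S⁻¹).PosDef := hS.inv
  have ht : ∀ (a b : ℕ) (M : Matrix (Fin a) (Fin b) ℝ), Mᴴ = Mᵀ := fun a b M =>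
    conjTranspose_eq_transpose_of_trivial M
  have hQdet : IsUnit Q.det := (Matrix.isUnit_iff_isUnit_det Q).mp hQ.isUnit
  have hRdet : IsUnit R.det := (Matrix.isUnit_iff_isUnit_det R).mp hR.isUnit
  -- E := Cᵀ R⁻¹ C + Q⁻¹ is positive definite
  have hCRC : (Cᵀ * R⁻¹ * C).PosSemidef := by
    have := hRi.posSemidef.conjTranspose_mul_mul_same C
    rwa [ht] at this
  set E := Cᵀ * R⁻¹ * C + Q⁻¹ with hE
  have hEpd : E.PosDef := Matrix.PosDef.posSemidef_add hCRC hQi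
  -- K := S⁻¹ + Aᵀ Q⁻¹ A is positive definite
  have hAQA : (Aᵀ * Q⁻¹ * A).PosSemidef := by
    have := hQi.posSemidef.conjTranspose_mul_mul_same A
    rwa [ht] at this
  set K := S⁻¹ + Aᵀ * Q⁻¹ * A with hK
  have hKpd : K.PosDef := hSi.add_posSemidef hAQA
  have hKdet : IsUnit K.det := (Matrix.isUnit_iff_isUnit_det K).mp hKpd.isUnit
  -- G := R + C Q Cᵀ is positive definite
  have hCQC : (C * Q * Cᵀ).PosSemidef := by
    have := hQ.posSemidef.mul_mul_conjTranspose_same C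
    rwa [ht] at this
  have hGpd : (R + C * Q * Cᵀ).PosDef := hR.add_posSemidef hCQC
  -- Woodbury for E⁻¹
  have hQQ : Q⁻¹ * Q = 1 := nonsing_inv_mul Q hQdet
  have hQQ' : Q * Q⁻¹ = 1 := mul_nonsing_inv Q hQdet
  have hEinv : E⁻¹ = Q - Q * Cᵀ * (R + C * Q * Cᵀ)⁻¹ * C * Q := by
    have h1 : E = Q⁻¹ + Cᵀ * R⁻¹ * C := by rw [hE, add_comm]
    rw [h1, add_mul_mul_inv_eq_sub Q⁻¹ Cᵀ R⁻¹ C hQi.isUnit hRi.isUnit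
      (by rw [nonsing_inv_nonsing_inv R hRdet, nonsing_inv_nonsing_inv Q hQdet]
          exact hGpd.isUnit),
      nonsing_inv_nonsing_inv R hRdet, nonsing_inv_nonsing_inv Q hQdet]
  -- Θ := Q⁻¹ - Q⁻¹ E⁻¹ Q⁻¹ = Cᵀ (R + C Q Cᵀ)⁻¹ C is positive semidefinite
  have hTheta : Q⁻¹ - Q⁻¹ * E⁻¹ * Q⁻¹ = Cᵀ * (R + C * Q * Cᵀ)⁻¹ * C := by
    rw [hEinv]
    simp only [Matrix.mul_sub, Matrix.sub_mul, ← Matrix.mul_assoc]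
    rw [hQQ, Matrix.one_mul, Matrix.one_mul,
      Matrix.mul_assoc _ Q Q⁻¹, hQQ', Matrix.mul_one, sub_sub_cancel]
  have hThetaPSD : (Q⁻¹ - Q⁻¹ * E⁻¹ * Q⁻¹).PosSemidef := by
    rw [hTheta]
    have := hGpd.inv.posSemidef.conjTranspose_mul_mul_same C
    rwa [ht] at this
  -- K' := S⁻¹ + Aᵀ Θ A is positive definite
  set K' := S⁻¹ + Aᵀ * (Q⁻¹ - Q⁻¹ * E⁻¹ * Q⁻¹) * A with hK'
  have hK'pd : K'.PosDef := by
    refine hSi.add_posSemidef ?_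
    have := hThetaPSD.conjTranspose_mul_mul_same A
    rwa [ht] at this
  -- Woodbury for P⁻¹
  have hPinv : P⁻¹ = Q⁻¹ - Q⁻¹ * A * K⁻¹ * Aᵀ * Q⁻¹ := by
    rw [hP]
    exact add_mul_mul_inv_eq_sub Q A S Aᵀ hQ.isUnit hS.isUnit hKpd.isUnit
  -- rewrite the matrix to invert in Woodbury form
  have hM : P⁻¹ + Cᵀ * R⁻¹ * C = E + (Q⁻¹ * A) * K⁻¹ * (-(Aᵀ * Q⁻¹)) := by
    rw [hPinv, hE]
    simp only [Matrix.mul_neg, Matrix.neg_mul, ← Matrix.mul_assoc, sub_eq_add_neg]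
    abel
  -- the inner matrix in the second Woodbury application is K'
  have hinner : (K⁻¹)⁻¹ + -(Aᵀ * Q⁻¹) * E⁻¹ * (Q⁻¹ * A) = K' := by
    rw [nonsing_inv_nonsing_inv K hKdet, hK, hK']
    simp only [Matrix.mul_sub, Matrix.sub_mul, Matrix.mul_add, Matrix.add_mul,
      Matrix.neg_mul, Matrix.mul_neg, ← Matrix.mul_assoc, sub_eq_add_neg]
    abel
  have hKinv : IsUnit K⁻¹ := hKpd.inv.isUnit
  rw [hM, add_mul_mul_inv_eq_sub E (Q⁻¹ * A) K⁻¹ (-(Aᵀ * Q⁻¹)) hEpd.isUnit hKinv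
    (by rw [hinner]; exact hK'pd.isUnit), hinner]
  simp only [Matrix.mul_neg, Matrix.neg_mul, neg_neg, sub_eq_add_neg, ← Matrix.mul_assoc]
end
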